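/- Let a₁(n) be the coefficients defined by ∏_{n≥1}(1 - X^n) = ∑_{n≥0} a₁(n) X^n. Then a₁(n) ≠ 0 if and only if n = (3m²+m)/2 for some integer m, in which case a₁(n) = (-1)^m. -/

import Mathlib

/-!
By Euler's pentagonal number theorem `∏ (1 - X^(k+1)) = ∑ₖ (-1)^k X^(pentagonal k)`, the `n`-th
coefficients of the finite partial products eventually equal those of the right-hand side. The
product over `Icc 1 n` already has the limiting `n`-th coefficient, because every further factor
`1 - X^k` with `k > n` is `1` modulo `X^(n+1)`. Finally `(3m² + m)/2 = pentagonal (-m)`.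
-/

/-- The `n`-th Fourier coefficient of the Euler product `∏ (1 - X^k)`. -/
noncomputable def a1 (n : ℕ) : ℤ :=
  (PowerSeries.coeff (R := ℤ) n) (∏ k ∈ Finset.Icc 1 n, (1 - PowerSeries.X ^ k))

open PowerSeries

theorem PowerSeries.coeff_mul_prod_one_sub_X_pow_of_lt {R ι : Type*} [CommRing R]
    (f : R⟦X⟧) (s : Finset ι) (d : ι → ℕ) {n : ℕ} (hd : ∀ i ∈ s, n < d i) :
    coeff n (f * ∏ i ∈ s, (1 - X ^ d i)) = coeff n f := by
  classical
  induction s using Finset.induction_on with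
  | empty => simp
  | insert i s hi ih =>
    rw [Finset.prod_insert hi, mul_left_comm, sub_mul, one_mul, map_sub, coeff_X_pow_mul',
      if_neg (not_le.2 (hd i (Finset.mem_insert_self i s))), sub_zero,
      ih fun j hj => hd j (Finset.mem_insert_of_mem hj)]

theorem PowerSeries.coeff_prod_Icc_one_sub_X_pow (R : Type*) [CommRing R] (n : ℕ) :
    coeff n (∏ k ∈ Finset.Icc 1 n, (1 - X ^ k : R⟦X⟧)) = coeff n (pentagonalSeries R) := by
  obtain ⟨s₀, hs₀⟩ := Filter.eventually_atTop.1 (coeff_prod_one_sub_X_pow_eventually_eq R n)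
  have hIcc : ∏ k ∈ Finset.Icc 1 n, (1 - X ^ k : R⟦X⟧) =
      ∏ i ∈ Finset.range n, (1 - X ^ (i + 1)) := by
    rw [Finset.range_eq_Ico, Finset.prod_Ico_add' (fun k => (1 - X ^ k : R⟦X⟧))]
    rfl
  have hsplit := Finset.prod_sdiff (f := fun i => (1 - X ^ (i + 1) : R⟦X⟧))
    (Finset.subset_union_right (s₁ := s₀) (s₂ := Finset.range n))
  rw [hIcc, ← hs₀ _ Finset.subset_union_left, ← hsplit, mul_comm,
    coeff_mul_prod_one_sub_X_pow_of_lt]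
  intro i hi
  simp only [Finset.mem_sdiff, Finset.mem_range] at hi
  omega

theorem natCast_pentagonal_neg (m : ℤ) : (pentagonal (-m) : ℤ) = (3 * m ^ 2 + m) / 2 := by
  rw [show 3 * m ^ 2 + m = 2 * (pentagonal (-m) : ℤ) by rw [two_mul_natCast_pentagonal_neg]; ring]
  omega

/-- `a₁(n) ≠ 0` iff `n` is a generalized pentagonal number `(3m²+m)/2`, in which case
`a₁(n) = (-1)^m`. -/
theorem a1_ne_zero_iff (n : ℕ) :
    (a1 n ≠ 0 ↔ ∃ m : ℤ, (3 * m ^ 2 + m) / 2 = (n : ℤ)) ∧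
      ∀ m : ℤ, (3 * m ^ 2 + m) / 2 = (n : ℤ) → a1 n = (-1 : ℤ) ^ m.natAbs := by
  have ha1 : a1 n = coeff n (pentagonalSeries ℤ) := coeff_prod_Icc_one_sub_X_pow ℤ n
  have hpent (m : ℤ) : (3 * m ^ 2 + m) / 2 = (n : ℤ) ↔ pentagonal (-m) = n := by
    rw [← natCast_pentagonal_neg, Nat.cast_inj]
  refine ⟨?_, fun m hm => ?_⟩
  · rw [ha1, Ne, coeff_pentagonalSeries_eq_zero_iff, not_not]
    simp only [hpent]
    exact ⟨fun ⟨k, hk⟩ => ⟨-k, by rwa [neg_neg]⟩, fun ⟨m, hm⟩ => ⟨-m, hm⟩⟩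
  · rw [ha1, ← (hpent m).1 hm, coeff_pentagonalSeries_pentagonal, Int.coe_negOnePow,
      Int.natAbs_neg]
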